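/- Under the strong-constraint solution ∂̃ = 0, the C-bracket of Double Field Theory reduces to the coordinate Courant bracket of generalized geometry: for doubled vectors V = (v^i, γ_i) and W = (w^i, ω_i) with smooth components on ℝ^n and all winding derivatives set to zero, the C-bracket components satisfy ([V,W]_C)^i = Σ_k (v^k ∂_k w^i − w^k ∂_k v^i), the Lie bracket of the vector parts, and ([V,W]_C)_i = Σ_k [v^k ∂_k ω_i + ω_k ∂_i v^k − w^k ∂_k γ_i − γ_k ∂_i w^k] − ½ ∂_i Σ_k (v^k ω_k − w^k γ_k), i.e. the one-form part equals (ℒ_v ω − ℒ_w γ − ½ d(ι_v ω − ι_w γ))_i in coordinates. -/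

import Mathlib

/-- Partial derivative in the `i`-th coordinate direction on `ℝ^n`. -/
noncomputable def pd {n : ℕ} (i : Fin n) (f : (Fin n → ℝ) → ℝ) : (Fin n → ℝ) → ℝ :=
  fun x => fderiv ℝ f x (Pi.single i 1)

/-- The winding derivative under the strong-constraint solution `∂̃ ≡ 0`. -/
def tpd0 {n : ℕ} (i : Fin n) (f : (Fin n → ℝ) → ℝ) : (Fin n → ℝ) → ℝ :=
  fun _ => 0

/-- Doubled contraction `Σ_K V^K ∂_K f = Σ_i (V^i ∂_i f + V_i ∂̃^i f)` with `∂̃ ≡ 0`. -/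
noncomputable def dirDer0 {n : ℕ} (Vup Vlo : Fin n → (Fin n → ℝ) → ℝ)
    (f : (Fin n → ℝ) → ℝ) (x : Fin n → ℝ) : ℝ :=
  ∑ i : Fin n, (Vup i x * pd i f x + Vlo i x * tpd0 i f x)

/-- Upper components of the C-bracket with `∂̃ ≡ 0` (so `∂^i ≡ 0`):
`([V,W]_C)^i = Σ_K [V^K ∂_K W^i − W^K ∂_K V^i] − ½ Σ_K [V^K ∂^i W_K − W^K ∂^i V_K]`. -/
noncomputable def cUp0 {n : ℕ} (Vup Vlo Wup Wlo : Fin n → (Fin n → ℝ) → ℝ)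
    (i : Fin n) (x : Fin n → ℝ) : ℝ :=
  dirDer0 Vup Vlo (Wup i) x - dirDer0 Wup Wlo (Vup i) x
    - (1 / 2) * ∑ k : Fin n,
        (Vup k x * tpd0 i (Wlo k) x + Vlo k x * tpd0 i (Wup k) x
          - Wup k x * tpd0 i (Vlo k) x - Wlo k x * tpd0 i (Vup k) x)

/-- Lower components of the C-bracket with `∂̃ ≡ 0`:
`([V,W]_C)_i = Σ_K [V^K ∂_K W_i − W^K ∂_K V_i] − ½ Σ_K [V^K ∂_i W_K − W^K ∂_i V_K]`. -/
noncomputable def cLo0 {n : ℕ} (Vup Vlo Wup Wlo : Fin n → (Fin n → ℝ) → ℝ)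
    (i : Fin n) (x : Fin n → ℝ) : ℝ :=
  dirDer0 Vup Vlo (Wlo i) x - dirDer0 Wup Wlo (Vlo i) x
    - (1 / 2) * ∑ k : Fin n,
        (Vup k x * pd i (Wlo k) x + Vlo k x * pd i (Wup k) x
          - Wup k x * pd i (Vlo k) x - Wlo k x * pd i (Vup k) x)

lemma pd_mul {n : ℕ} (i : Fin n) (f g : (Fin n → ℝ) → ℝ) (x : Fin n → ℝ)
    (hf : DifferentiableAt ℝ f x) (hg : DifferentiableAt ℝ g x) :
    pd i (fun y => f y * g y) x = f x * pd i g x + g x * pd i f x := by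
  simp only [pd, fderiv_fun_mul hf hg]
  simp [mul_comm]

/-- Under the strong-constraint solution `∂̃ = 0` the C-bracket of DFT reduces to the
coordinate Courant bracket: for `V = (v, γ)` and `W = (w, ω)`, the vector part is the
Lie bracket `([V,W]_C)^i = Σ_k (v^k ∂_k w^i − w^k ∂_k v^i)` and the one-form part is
`([V,W]_C)_i = Σ_k [v^k ∂_k ω_i + ω_k ∂_i v^k − w^k ∂_k γ_i − γ_k ∂_i w^k]
  − ½ ∂_i Σ_k (v^k ω_k − w^k γ_k)`,
i.e. `(ℒ_v ω − ℒ_w γ − ½ d(ι_v ω − ι_w γ))_i` in coordinates. -/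
theorem cbracket_reduces_to_courant {n : ℕ}
    (v γ w ω : Fin n → (Fin n → ℝ) → ℝ)
    (hv : ∀ i, ContDiff ℝ (⊤ : ℕ∞) (v i)) (hγ : ∀ i, ContDiff ℝ (⊤ : ℕ∞) (γ i))
    (hw : ∀ i, ContDiff ℝ (⊤ : ℕ∞) (w i)) (hω : ∀ i, ContDiff ℝ (⊤ : ℕ∞) (ω i)) :
    (∀ (i : Fin n) (x : Fin n → ℝ),
        cUp0 v γ w ω i x = ∑ k : Fin n, (v k x * pd k (w i) x - w k x * pd k (v i) x)) ∧
    (∀ (i : Fin n) (x : Fin n → ℝ),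
        cLo0 v γ w ω i x
          = (∑ k : Fin n, (v k x * pd k (ω i) x + ω k x * pd i (v k) x
              - w k x * pd k (γ i) x - γ k x * pd i (w k) x))
            - (1 / 2) * pd i (fun y => ∑ k : Fin n, (v k y * ω k y - w k y * γ k y)) x) := by
  have hvd : ∀ k (x : Fin n → ℝ), DifferentiableAt ℝ (v k) x :=
    fun k x => (hv k).differentiable (by simp) x
  have hγd : ∀ k (x : Fin n → ℝ), DifferentiableAt ℝ (γ k) x :=
    fun k x => (hγ k).differentiable (by simp) x
  have hwd : ∀ k (x : Fin n → ℝ), DifferentiableAt ℝ (w k) x :=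
    fun k x => (hw k).differentiable (by simp) x
  have hωd : ∀ k (x : Fin n → ℝ), DifferentiableAt ℝ (ω k) x :=
    fun k x => (hω k).differentiable (by simp) x
  constructor
  · intro i x
    simp [cUp0, dirDer0, tpd0, Finset.sum_sub_distrib]
  · intro i x
    have hpd : pd i (fun y => ∑ k : Fin n, (v k y * ω k y - w k y * γ k y)) x
        = ∑ k : Fin n, (v k x * pd i (ω k) x + ω k x * pd i (v k) x
            - (w k x * pd i (γ k) x + γ k x * pd i (w k) x)) := by
      have h1 : ∀ k : Fin n, pd i (fun y => v k y * ω k y - w k y * γ k y) x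
          = v k x * pd i (ω k) x + ω k x * pd i (v k) x
            - (w k x * pd i (γ k) x + γ k x * pd i (w k) x) := by
        intro k
        have : pd i (fun y => v k y * ω k y - w k y * γ k y) x
            = pd i (fun y => v k y * ω k y) x - pd i (fun y => w k y * γ k y) x := by
          simp only [pd]
          rw [fderiv_fun_sub ((hvd k x).fun_mul (hωd k x)) ((hwd k x).fun_mul (hγd k x))]
          simp
        rw [this, pd_mul i _ _ x (hvd k x) (hωd k x), pd_mul i _ _ x (hwd k x) (hγd k x)]
      have hsum : pd i (fun y => ∑ k : Fin n, (v k y * ω k y - w k y * γ k y)) x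
          = ∑ k : Fin n, pd i (fun y => v k y * ω k y - w k y * γ k y) x := by
        simp only [pd]
        rw [fderiv_fun_sum (fun k _ => ((hvd k x).fun_mul (hωd k x)).fun_sub ((hwd k x).fun_mul (hγd k x)))]
        simp
      rw [hsum]
      exact Finset.sum_congr rfl fun k _ => h1 k
    rw [hpd]
    simp only [cLo0, dirDer0, tpd0, mul_zero, add_zero]
    rw [Finset.mul_sum, Finset.mul_sum]
    simp only [← Finset.sum_sub_distrib]
    exact Finset.sum_congr rfl fun k _ => by ring
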